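/- arXiv:2102.07335 — 6 statements merged into one kernel-verified Lean document; each statement's English description precedes it below -/
import Mathlib

section
/- If f : [0,1] → ℝ is convex and p : [0,1] → ℝ is nonnegative and symmetric about 1/2 (i.e. p(1-t) = p(t) for all t ∈ [0,1]), then for all a, b in the domain of f, (∫₀¹ p(t) dt) · f((a+b)/2) ≤ ∫₀¹ p(t) · f((1-t)·a + t·b) dt. -/
/-! The points `(1 - t) a + t b` and `t a + (1 - t) b` have midpoint `(a + b) / 2`, so by convexity
`p t f ((a + b) / 2)` is at most the average of the integrand at `t` and at `1 - t` (here the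
symmetry `p (1 - t) = p t` enters). Integrating over `[0, 1]`, the reflection `t ↦ 1 - t` preserves
the integral, so the average integrates to the right-hand side. -/

open MeasureTheory Set intervalIntegral

lemma ConvexOn.map_add_div_two_le {s : Set ℝ} {f : ℝ → ℝ} (hf : ConvexOn ℝ s f) {x y : ℝ}
    (hx : x ∈ s) (hy : y ∈ s) : f ((x + y) / 2) ≤ (f x + f y) / 2 := by
  have h := hf.2 hx hy (by norm_num : (0 : ℝ) ≤ 1 / 2) (by norm_num : (0 : ℝ) ≤ 1 / 2) (by norm_num)
  simp only [smul_eq_mul] at h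
  rw [show 1 / 2 * x + 1 / 2 * y = (x + y) / 2 by ring] at h
  linarith

lemma ConvexOn.map_add_div_two_le_reflect {s : Set ℝ} {f : ℝ → ℝ} (hf : ConvexOn ℝ s f)
    {a b t : ℝ} (ha : a ∈ s) (hb : b ∈ s) (ht : t ∈ Icc (0 : ℝ) 1) :
    f ((a + b) / 2) ≤ (f ((1 - t) * a + t * b) + f ((1 - (1 - t)) * a + (1 - t) * b)) / 2 := by
  have hmem : ∀ u ∈ Icc (0 : ℝ) 1, (1 - u) * a + u * b ∈ s := fun u hu =>
    hf.1 ha hb (by linarith [hu.2]) hu.1 (by ring)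
  have hu : 1 - t ∈ Icc (0 : ℝ) 1 := ⟨by linarith [ht.2], by linarith [ht.1]⟩
  convert hf.map_add_div_two_le (hmem t ht) (hmem (1 - t) hu) using 2
  ring

lemma intervalIntegral.integral_le_of_le_add_comp_one_sub_div_two {φ g : ℝ → ℝ}
    (hφ : IntervalIntegrable φ volume 0 1) (hg : IntervalIntegrable g volume 0 1)
    (h : ∀ t ∈ Icc (0 : ℝ) 1, φ t ≤ (g t + g (1 - t)) / 2) :
    ∫ t in (0 : ℝ)..1, φ t ≤ ∫ t in (0 : ℝ)..1, g t := by
  have hg' : IntervalIntegrable (fun t => g (1 - t)) volume 0 1 := by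
    simpa using (hg.comp_sub_left 1).symm
  have hreflect : ∫ t in (0 : ℝ)..1, g (1 - t) = ∫ t in (0 : ℝ)..1, g t := by
    simp [integral_comp_sub_left]
  calc ∫ t in (0 : ℝ)..1, φ t
      ≤ ∫ t in (0 : ℝ)..1, (g t + g (1 - t)) / 2 :=
        integral_mono_on zero_le_one hφ ((hg.add hg').div_const 2) h
    _ = ∫ t in (0 : ℝ)..1, g t := by
        rw [integral_div, integral_add hg hg', hreflect]
        ring

theorem fejer_left (f p : ℝ → ℝ)
    (hf : ConvexOn ℝ (Icc (0:ℝ) 1) f)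
    (hp0 : ∀ t ∈ Icc (0:ℝ) 1, 0 ≤ p t)
    (hpsym : ∀ t ∈ Icc (0:ℝ) 1, p (1 - t) = p t)
    (hpint : IntervalIntegrable p volume 0 1)
    (a b : ℝ) (ha : a ∈ Icc (0:ℝ) 1) (hb : b ∈ Icc (0:ℝ) 1)
    (hint : IntervalIntegrable (fun t => p t * f ((1 - t) * a + t * b)) volume 0 1) :
    (∫ t in (0:ℝ)..1, p t) * f ((a + b) / 2) ≤
      ∫ t in (0:ℝ)..1, p t * f ((1 - t) * a + t * b) := by
  rw [← intervalIntegral.integral_mul_const]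
  refine integral_le_of_le_add_comp_one_sub_div_two (hpint.mul_const _) hint fun t ht => ?_
  have hconv := mul_le_mul_of_nonneg_left (hf.map_add_div_two_le_reflect ha hb ht) (hp0 t ht)
  rw [hpsym t ht]
  linarith
end

section
/- If f : [0,1] → ℝ is convex and p : [0,1] → ℝ is nonnegative and symmetric about 1/2, then for all a, b in the domain, ∫₀¹ p(t) · f((1-t)·a + t·b) dt ≤ (∫₀¹ p(t) dt) · (f(a) + f(b))/2. -/
/-! Pairing each point `t` of the segment with its mirror image `1 - t` and using convexity at both
gives `f((1-t)a+tb) + f(ta+(1-t)b) ≤ f a + f b`; since the weight `p` is symmetric, the integrals of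
`p t * f((1-t)a+tb)` and `p t * f(ta+(1-t)b)` coincide, so twice the left side is at most
`(∫ p) * (f a + f b)`. -/

open MeasureTheory Set intervalIntegral

theorem ConvexOn.apply_add_apply_swap_le {E : Type*} [AddCommGroup E] [Module ℝ E] {s : Set E}
    {f : E → ℝ} (hf : ConvexOn ℝ s f) {a b : E} (ha : a ∈ s) (hb : b ∈ s) {t : ℝ}
    (ht : t ∈ Icc (0 : ℝ) 1) :
    f ((1 - t) • a + t • b) + f (t • a + (1 - t) • b) ≤ f a + f b := by
  obtain ⟨ht0, ht1⟩ := ht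
  have hleft := hf.2 ha hb (sub_nonneg.2 ht1) ht0 (sub_add_cancel 1 t)
  have hright := hf.2 ha hb ht0 (sub_nonneg.2 ht1) (add_sub_cancel t 1)
  simp only [smul_eq_mul] at hleft hright
  linarith

section SymmetricWeight

variable {p φ : ℝ → ℝ}

theorem intervalIntegrable_mul_comp_one_sub (hpsym : ∀ t ∈ Icc (0 : ℝ) 1, p (1 - t) = p t)
    (h : IntervalIntegrable (fun t => p t * φ t) volume 0 1) :
    IntervalIntegrable (fun t => p t * φ (1 - t)) volume 0 1 := by
  have hrefl := (h.comp_sub_left 1).symm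
  rw [sub_zero, sub_self] at hrefl
  refine hrefl.congr fun t ht => ?_
  rw [uIoc_of_le zero_le_one] at ht
  rw [hpsym t (Ioc_subset_Icc_self ht)]

theorem integral_mul_comp_one_sub (hpsym : ∀ t ∈ Icc (0 : ℝ) 1, p (1 - t) = p t) :
    ∫ t in (0 : ℝ)..1, p t * φ (1 - t) = ∫ t in (0 : ℝ)..1, p t * φ t := by
  calc ∫ t in (0 : ℝ)..1, p t * φ (1 - t)
      = ∫ t in (0 : ℝ)..1, p (1 - t) * φ (1 - t) := by
        refine integral_congr fun t ht => ?_
        rw [uIcc_of_le zero_le_one] at ht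
        rw [hpsym t ht]
    _ = ∫ t in (0 : ℝ)..1, p t * φ t := by
        rw [integral_comp_sub_left (fun t => p t * φ t), sub_self, sub_zero]

theorem integral_mul_le_of_add_comp_one_sub_le (hp0 : ∀ t ∈ Icc (0 : ℝ) 1, 0 ≤ p t)
    (hpsym : ∀ t ∈ Icc (0 : ℝ) 1, p (1 - t) = p t) (hpint : IntervalIntegrable p volume 0 1)
    (hφ : IntervalIntegrable (fun t => p t * φ t) volume 0 1) {M : ℝ}
    (hM : ∀ t ∈ Icc (0 : ℝ) 1, φ t + φ (1 - t) ≤ M) :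
    ∫ t in (0 : ℝ)..1, p t * φ t ≤ (∫ t in (0 : ℝ)..1, p t) * (M / 2) := by
  have hrefl := intervalIntegrable_mul_comp_one_sub hpsym hφ
  have hle : ∫ t in (0 : ℝ)..1, (p t * φ t + p t * φ (1 - t)) ≤ ∫ t in (0 : ℝ)..1, p t * M :=
    integral_mono_on zero_le_one (hφ.add hrefl) (hpint.mul_const M) fun t ht => by
      rw [← mul_add]
      exact mul_le_mul_of_nonneg_left (hM t ht) (hp0 t ht)
  rw [integral_add hφ hrefl, integral_mul_comp_one_sub hpsym,
    intervalIntegral.integral_mul_const] at hle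
  linarith

end SymmetricWeight

theorem fejer_right (f p : ℝ → ℝ)
    (hf : ConvexOn ℝ (Icc (0:ℝ) 1) f)
    (hp0 : ∀ t ∈ Icc (0:ℝ) 1, 0 ≤ p t)
    (hpsym : ∀ t ∈ Icc (0:ℝ) 1, p (1 - t) = p t)
    (hpint : IntervalIntegrable p volume 0 1)
    (a b : ℝ) (ha : a ∈ Icc (0:ℝ) 1) (hb : b ∈ Icc (0:ℝ) 1)
    (hint : IntervalIntegrable (fun t => p t * f ((1 - t) * a + t * b)) volume 0 1) :
    (∫ t in (0:ℝ)..1, p t * f ((1 - t) * a + t * b)) ≤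
      (∫ t in (0:ℝ)..1, p t) * ((f a + f b) / 2) := by
  refine integral_mul_le_of_add_comp_one_sub_le hp0 hpsym hpint hint fun t ht => ?_
  simpa only [smul_eq_mul, sub_sub_cancel] using hf.apply_add_apply_swap_le ha hb ht
end

section
/- Let f : [0,1] → ℝ be convex and differentiable, and p : [0,1] → ℝ be continuous and nonnegative. Then (∫₀¹ f(t) dt)·(∫₀¹ p(t) dt) + (∫₀¹ f'(t) dt)·(∫₀¹ t·p(t) dt) − (∫₀¹ t·f'(t) dt)·(∫₀¹ p(t) dt) ≤ ∫₀¹ f(t)·p(t) dt. -/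
/-!
Integrating the tangent-line inequality `f s + f' s * (t - s) ≤ f t` against the weight `p t` in
`t`, and then in `s`, gives the inequality. Every integrability needed comes for free: `f` and
`p` are continuous, and the derivative `f'` of the convex function `f` is monotone.
-/

open MeasureTheory Set intervalIntegral

namespace ConvexOn

variable {S : Set ℝ} {f : ℝ → ℝ} {x y : ℝ}

theorem add_mul_sub_le_of_hasDerivAt {f' : ℝ} (hf : ConvexOn ℝ S f) (hx : x ∈ S) (hy : y ∈ S)
    (hd : HasDerivAt f f' x) : f x + f' * (y - x) ≤ f y := by
  rcases lt_trichotomy x y with hxy | rfl | hyx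
  · have h := hf.le_slope_of_hasDerivAt hx hy hxy hd
    rw [slope_def_field, le_div_iff₀ (sub_pos.mpr hxy)] at h
    linarith
  · simp
  · have h := hf.slope_le_of_hasDerivAt hy hx hyx hd
    rw [slope_def_field, div_le_iff₀ (sub_pos.mpr hyx)] at h
    linarith

theorem monotoneOn_of_hasDerivAt {f' : ℝ → ℝ} (hf : ConvexOn ℝ S f)
    (hd : ∀ x ∈ S, HasDerivAt f (f' x) x) : MonotoneOn f' S := by
  intro x hx y hy hxy
  rcases hxy.eq_or_lt with rfl | hxy
  · rfl
  exact (hf.le_slope_of_hasDerivAt hx hy hxy (hd x hx)).trans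
    (hf.slope_le_of_hasDerivAt hx hy hxy (hd y hy))

end ConvexOn

section LevinSteckin

variable {f f' p : ℝ → ℝ} {a b : ℝ}

theorem integral_tangent_mul_eq (hp : IntervalIntegrable p volume a b)
    (htp : IntervalIntegrable (fun t => t * p t) volume a b) (c d s : ℝ) :
    ∫ t in a..b, (c + d * (t - s)) * p t
      = c * (∫ t in a..b, p t) + d * ((∫ t in a..b, t * p t) - s * ∫ t in a..b, p t) := by
  have hsplit : (fun t => (c + d * (t - s)) * p t)
      = fun t => (c - d * s) * p t + d * (t * p t) := by
    funext t; ring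
  rw [hsplit, integral_add (hp.const_mul _) (htp.const_mul _),
    intervalIntegral.integral_const_mul, intervalIntegral.integral_const_mul]
  ring

theorem tangent_integral_le (hab : a ≤ b) (hf : ConvexOn ℝ (Icc a b) f)
    (hfc : ContinuousOn f (Icc a b)) (hpc : ContinuousOn p (Icc a b))
    (hp0 : ∀ t ∈ Icc a b, 0 ≤ p t) {s d : ℝ} (hs : s ∈ Icc a b) (hd : HasDerivAt f d s) :
    f s * (∫ t in a..b, p t) + d * ((∫ t in a..b, t * p t) - s * ∫ t in a..b, p t)
      ≤ ∫ t in a..b, f t * p t := by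
  rw [← uIcc_of_le hab] at hpc hfc
  rw [← integral_tangent_mul_eq hpc.intervalIntegrable
    (continuousOn_id.mul hpc).intervalIntegrable]
  refine integral_mono_on hab ?_ (hfc.mul hpc).intervalIntegrable fun t ht =>
    mul_le_mul_of_nonneg_right (hf.add_mul_sub_le_of_hasDerivAt hs ht hd) (hp0 t ht)
  exact ((continuousOn_const.add (continuousOn_const.mul
    (continuousOn_id.sub continuousOn_const))).mul hpc).intervalIntegrable

theorem levin_steckin_Icc (hab : a ≤ b) (hf : ConvexOn ℝ (Icc a b) f)
    (hderiv : ∀ t ∈ Icc a b, HasDerivAt f (f' t) t) (hpc : ContinuousOn p (Icc a b))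
    (hp0 : ∀ t ∈ Icc a b, 0 ≤ p t) :
    (∫ t in a..b, f t) * (∫ t in a..b, p t)
      + ((∫ t in a..b, f' t) * (∫ t in a..b, t * p t)
        - (∫ t in a..b, t * f' t) * (∫ t in a..b, p t)) ≤
      (b - a) * ∫ t in a..b, f t * p t := by
  set A := ∫ t in a..b, p t
  set B := ∫ t in a..b, t * p t
  have hfc : ContinuousOn f (Icc a b) := fun t ht => (hderiv t ht).continuousAt.continuousWithinAt
  have hf'int : IntervalIntegrable f' volume a b := by
    rw [← uIcc_of_le hab] at hderiv hf
    exact (hf.monotoneOn_of_hasDerivAt hderiv).intervalIntegrable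
  have htf'int : IntervalIntegrable (fun t => t * f' t) volume a b :=
    hf'int.continuousOn_mul continuousOn_id
  have hfA : IntervalIntegrable (fun s => f s * A) volume a b :=
    ((uIcc_of_le hab ▸ hfc).intervalIntegrable).mul_const A
  have hrest := (hf'int.mul_const B).sub (htf'int.mul_const A)
  calc (∫ t in a..b, f t) * A + ((∫ t in a..b, f' t) * B - (∫ t in a..b, t * f' t) * A)
      = ∫ s in a..b, f s * A + (f' s * B - s * f' s * A) := by
        rw [integral_add hfA hrest, integral_sub (hf'int.mul_const B) (htf'int.mul_const A),
          intervalIntegral.integral_mul_const, intervalIntegral.integral_mul_const,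
          intervalIntegral.integral_mul_const]
    _ ≤ ∫ _ in a..b, ∫ t in a..b, f t * p t :=
        integral_mono_on hab (hfA.add hrest) intervalIntegrable_const fun s hs => by
          have h := tangent_integral_le hab hf hfc hpc hp0 hs (hderiv s hs)
          linarith
    _ = (b - a) * ∫ t in a..b, f t * p t := by rw [intervalIntegral.integral_const, smul_eq_mul]

end LevinSteckin

theorem levin_steckin_general_general (f f' p : ℝ → ℝ)
    (hf : ConvexOn ℝ (Icc (0:ℝ) 1) f)
    (hderiv : ∀ t ∈ Icc (0:ℝ) 1, HasDerivAt f (f' t) t)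
    (hpc : ContinuousOn p (Icc (0:ℝ) 1))
    (hp0 : ∀ t ∈ Icc (0:ℝ) 1, 0 ≤ p t) :
    (∫ t in (0:ℝ)..1, f t) * (∫ t in (0:ℝ)..1, p t)
      + ((∫ t in (0:ℝ)..1, f' t) * (∫ t in (0:ℝ)..1, t * p t)
        - (∫ t in (0:ℝ)..1, t * f' t) * (∫ t in (0:ℝ)..1, p t)) ≤
      ∫ t in (0:ℝ)..1, f t * p t := by
  simpa using levin_steckin_Icc zero_le_one hf hderiv hpc hp0

theorem levin_steckin_general (f f' p : ℝ → ℝ)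
    (hf : ConvexOn ℝ (Icc (0:ℝ) 1) f)
    (hderiv : ∀ t ∈ Icc (0:ℝ) 1, HasDerivAt f (f' t) t)
    (hpc : ContinuousOn p (Icc (0:ℝ) 1))
    (hp0 : ∀ t ∈ Icc (0:ℝ) 1, 0 ≤ p t)
    (hfint : IntervalIntegrable f volume 0 1)
    (hf'int : IntervalIntegrable f' volume 0 1)
    (htf'int : IntervalIntegrable (fun t => t * f' t) volume 0 1)
    (hpfint : IntervalIntegrable (fun t => f t * p t) volume 0 1) :
    (∫ t in (0:ℝ)..1, f t) * (∫ t in (0:ℝ)..1, p t)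
      + ((∫ t in (0:ℝ)..1, f' t) * (∫ t in (0:ℝ)..1, t * p t)
        - (∫ t in (0:ℝ)..1, t * f' t) * (∫ t in (0:ℝ)..1, p t)) ≤
      ∫ t in (0:ℝ)..1, f t * p t :=
  levin_steckin_general_general f f' p hf hderiv hpc hp0
end

section
/- Let f : [0,1] → ℝ be convex and differentiable, and p : [0,1] → ℝ be continuous and nonnegative. Then ∫₀¹ p(t)·f(t) dt + (1/2)·∫₀¹ p(t)·f'(t) dt − ∫₀¹ t·p(t)·f'(t) dt ≤ (∫₀¹ p(t) dt)·(∫₀¹ f(t) dt). -/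
open MeasureTheory Set intervalIntegral

theorem levin_steckin_general2 (f f' p : ℝ → ℝ)
    (hf : ConvexOn ℝ (Icc (0:ℝ) 1) f)
    (hderiv : ∀ t ∈ Icc (0:ℝ) 1, HasDerivAt f (f' t) t)
    (hpc : ContinuousOn p (Icc (0:ℝ) 1))
    (hp0 : ∀ t ∈ Icc (0:ℝ) 1, 0 ≤ p t)
    (hfint : IntervalIntegrable f volume 0 1)
    (hpfint : IntervalIntegrable (fun t => p t * f t) volume 0 1)
    (hpf'int : IntervalIntegrable (fun t => p t * f' t) volume 0 1)
    (htpf'int : IntervalIntegrable (fun t => t * p t * f' t) volume 0 1) :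
    (∫ t in (0:ℝ)..1, p t * f t) + (1 / 2) * (∫ t in (0:ℝ)..1, p t * f' t)
      - (∫ t in (0:ℝ)..1, t * p t * f' t) ≤
      (∫ t in (0:ℝ)..1, p t) * (∫ t in (0:ℝ)..1, f t) := by
  -- Tangent line inequality: for t, s ∈ [0,1], f t + f' t * (s - t) ≤ f s
  have tangent : ∀ t ∈ Icc (0:ℝ) 1, ∀ s ∈ Icc (0:ℝ) 1,
      f t + f' t * (s - t) ≤ f s := by
    intro t ht s hs
    rcases lt_trichotomy s t with h | h | h
    · have hsl := hf.slope_le_of_hasDerivAt hs ht h (hderiv t ht)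
      rw [slope_def_field] at hsl
      have hpos : (0:ℝ) < t - s := by linarith
      rw [div_le_iff₀ hpos] at hsl
      nlinarith
    · simp [h]
    · have hsl := hf.le_slope_of_hasDerivAt ht hs h (hderiv t ht)
      rw [slope_def_field] at hsl
      have hpos : (0:ℝ) < s - t := by linarith
      rw [le_div_iff₀ hpos] at hsl
      nlinarith
  -- Integrate the tangent inequality over s: f t + f' t * (1/2 - t) ≤ ∫ f
  have key : ∀ t ∈ Icc (0:ℝ) 1,
      f t + f' t * (1 / 2 - t) ≤ ∫ s in (0:ℝ)..1, f s := by
    intro t ht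
    have hint : IntervalIntegrable (fun s => f t + f' t * (s - t)) volume 0 1 :=
      (by continuity : Continuous fun s : ℝ => f t + f' t * (s - t)).intervalIntegrable 0 1
    have hle : (∫ s in (0:ℝ)..1, (f t + f' t * (s - t))) ≤ ∫ s in (0:ℝ)..1, f s := by
      apply intervalIntegral.integral_mono_on (by norm_num) hint hfint
      intro s hs
      exact tangent t ht s hs
    have hcalc : (∫ s in (0:ℝ)..1, (f t + f' t * (s - t))) = f t + f' t * (1 / 2 - t) := by
      have : (∫ s in (0:ℝ)..1, (f t + f' t * (s - t)))
          = ∫ s in (0:ℝ)..1, (f t - f' t * t + f' t * s) := by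
        congr 1; funext s; ring
      rw [this, intervalIntegral.integral_add
        (intervalIntegrable_const)
        ((by continuity : Continuous fun s : ℝ => f' t * s).intervalIntegrable 0 1),
        intervalIntegral.integral_const, intervalIntegral.integral_const_mul,
        integral_id]
      norm_num
      ring
    linarith [hcalc ▸ hle]
  -- Multiply by p t and integrate over t
  have hmono : ∀ t ∈ Icc (0:ℝ) 1,
      p t * f t + (1 / 2 * (p t * f' t) - t * p t * f' t)
        ≤ p t * (∫ s in (0:ℝ)..1, f s) := by
    intro t ht
    have := mul_le_mul_of_nonneg_left (key t ht) (hp0 t ht)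
    nlinarith [this]
  have hLint : IntervalIntegrable
      (fun t => p t * f t + (1 / 2 * (p t * f' t) - t * p t * f' t)) volume 0 1 :=
    hpfint.add ((hpf'int.const_mul (1 / 2)).sub htpf'int)
  have hRint : IntervalIntegrable
      (fun t => p t * (∫ s in (0:ℝ)..1, f s)) volume 0 1 :=
    ((by rw [uIcc_of_le (by norm_num : (0:ℝ) ≤ 1)]; exact hpc :
      ContinuousOn p (uIcc (0:ℝ) 1)).intervalIntegrable).mul_const _
  have hmain := intervalIntegral.integral_mono_on (by norm_num) hLint hRint hmono
  rw [intervalIntegral.integral_add hpfint ((hpf'int.const_mul (1 / 2)).sub htpf'int),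
    intervalIntegral.integral_sub (hpf'int.const_mul (1 / 2)) htpf'int,
    intervalIntegral.integral_const_mul, intervalIntegral.integral_mul_const] at hmain
  linarith
end

section
/- Let f : [0,1] → ℝ be convex and differentiable, and let p : [0,1] → ℝ be nonnegative, continuous, symmetric about 1/2 (p(1-t) = p(t)), and non-decreasing on [0, 1/2]. Then (∫₀¹ f'(t) dt)·(∫₀¹ t·p(t) dt) ≤ (∫₀¹ t·f'(t) dt)·(∫₀¹ p(t) dt). -/
/-!
Pairing `t` with `1 - t` shows `∫ t p = ½ ∫ p` for the symmetric `p`, and `½ ∫ f' ≤ ∫ t f'` for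
the derivative `f'` of the convex `f`, which is monotone (Chebyshev's inequality against the
increasing weight `t - ½`). Multiplying the latter by `∫ p ≥ 0` gives the claim.
-/

open MeasureTheory Set intervalIntegral

theorem intervalIntegral.integral_comp_add_sub (h : ℝ → ℝ) (a b : ℝ) :
    ∫ t in a..b, h (a + b - t) = ∫ t in a..b, h t := by
  simp [integral_comp_sub_left h (a + b)]

theorem integral_mul_id_eq_midpoint_mul_integral {p : ℝ → ℝ} {a b : ℝ}
    (hp : IntervalIntegrable p volume a b) (hsym : ∀ t ∈ uIcc a b, p (a + b - t) = p t) :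
    ∫ t in a..b, t * p t = (a + b) / 2 * ∫ t in a..b, p t := by
  have htp : IntervalIntegrable (fun t => t * p t) volume a b :=
    hp.continuousOn_mul continuousOn_id
  have hreflect : ∫ t in a..b, t * p t = ∫ t in a..b, ((a + b) * p t - t * p t) := by
    rw [← integral_comp_add_sub]
    refine integral_congr fun t ht => ?_
    simp only [hsym t ht]
    ring
  rw [integral_sub (hp.const_mul _) htp, intervalIntegral.integral_const_mul] at hreflect
  linarith

theorem MonotoneOn.midpoint_mul_integral_le_integral_mul_id {g : ℝ → ℝ} {a b : ℝ} (hab : a ≤ b)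
    (hg : MonotoneOn g (Icc a b)) :
    (a + b) / 2 * ∫ t in a..b, g t ≤ ∫ t in a..b, t * g t := by
  have hgi : IntervalIntegrable g volume a b :=
    MonotoneOn.intervalIntegrable (by rwa [uIcc_of_le hab])
  have htg : IntervalIntegrable (fun t => t * g t) volume a b :=
    hgi.continuousOn_mul continuousOn_id
  set h : ℝ → ℝ := fun t => (t - (a + b) / 2) * g t
  have hsplit : ∫ t in a..b, h t = (∫ t in a..b, t * g t) - (a + b) / 2 * ∫ t in a..b, g t := by
    simp only [h, sub_mul]
    rw [integral_sub htg (hgi.const_mul _), intervalIntegral.integral_const_mul]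
  have hhi : IntervalIntegrable h volume a b := by
    simpa only [h, sub_mul] using htg.sub (hgi.const_mul ((a + b) / 2))
  have hhi' : IntervalIntegrable (fun t => h (a + b - t)) volume a b := by
    simpa using (hhi.comp_sub_left (a + b)).symm
  have hpair : 0 ≤ ∫ t in a..b, (h t + h (a + b - t)) := by
    refine integral_nonneg hab fun t ht => ?_
    have hrt : a + b - t ∈ Icc a b := ⟨by linarith [ht.2], by linarith [ht.1]⟩
    have hfactor : h t + h (a + b - t) = (t - (a + b) / 2) * (g t - g (a + b - t)) := by
      simp only [h]; ring
    rw [hfactor]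
    rcases le_total t ((a + b) / 2) with hle | hge
    · exact mul_nonneg_of_nonpos_of_nonpos (by linarith)
        (sub_nonpos.2 (hg ht hrt (by linarith)))
    · exact mul_nonneg (by linarith) (sub_nonneg.2 (hg hrt ht (by linarith)))
  rw [integral_add hhi hhi', integral_comp_add_sub] at hpair
  linarith

theorem moment_inequality_general (f f' p : ℝ → ℝ)
    (hf : ConvexOn ℝ (Icc (0:ℝ) 1) f)
    (hderiv : ∀ t ∈ Icc (0:ℝ) 1, HasDerivAt f (f' t) t)
    (hpc : ContinuousOn p (Icc (0:ℝ) 1))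
    (hp0 : ∀ t ∈ Icc (0:ℝ) 1, 0 ≤ p t)
    (hpsym : ∀ t ∈ Icc (0:ℝ) 1, p (1 - t) = p t) :
    (∫ t in (0:ℝ)..1, f' t) * (∫ t in (0:ℝ)..1, t * p t) ≤
      (∫ t in (0:ℝ)..1, t * f' t) * (∫ t in (0:ℝ)..1, p t) := by
  have hf'mono : MonotoneOn f' (Icc 0 1) :=
    (hf.monotoneOn_deriv fun t ht => (hderiv t ht).differentiableAt).congr
      fun t ht => (hderiv t ht).deriv
  have hp_moment : ∫ t in (0:ℝ)..1, t * p t = 1 / 2 * ∫ t in (0:ℝ)..1, p t := by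
    simpa using integral_mul_id_eq_midpoint_mul_integral
      (hpc.intervalIntegrable_of_Icc zero_le_one) (by simpa [uIcc_of_le zero_le_one] using hpsym)
  have hf'_moment : 1 / 2 * ∫ t in (0:ℝ)..1, f' t ≤ ∫ t in (0:ℝ)..1, t * f' t := by
    simpa using hf'mono.midpoint_mul_integral_le_integral_mul_id zero_le_one
  have hp_mass : 0 ≤ ∫ t in (0:ℝ)..1, p t := integral_nonneg zero_le_one hp0
  calc (∫ t in (0:ℝ)..1, f' t) * (∫ t in (0:ℝ)..1, t * p t)
      = (1 / 2 * ∫ t in (0:ℝ)..1, f' t) * ∫ t in (0:ℝ)..1, p t := by rw [hp_moment]; ring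
    _ ≤ (∫ t in (0:ℝ)..1, t * f' t) * ∫ t in (0:ℝ)..1, p t :=
      mul_le_mul_of_nonneg_right hf'_moment hp_mass

theorem moment_inequality (f f' p : ℝ → ℝ)
    (hf : ConvexOn ℝ (Icc (0:ℝ) 1) f)
    (hderiv : ∀ t ∈ Icc (0:ℝ) 1, HasDerivAt f (f' t) t)
    (hpc : ContinuousOn p (Icc (0:ℝ) 1))
    (hp0 : ∀ t ∈ Icc (0:ℝ) 1, 0 ≤ p t)
    (hpsym : ∀ t ∈ Icc (0:ℝ) 1, p (1 - t) = p t)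
    (hpmono : MonotoneOn p (Icc (0:ℝ) (1 / 2)))
    (hf'int : IntervalIntegrable f' volume 0 1)
    (htf'int : IntervalIntegrable (fun t => t * f' t) volume 0 1) :
    (∫ t in (0:ℝ)..1, f' t) * (∫ t in (0:ℝ)..1, t * p t) ≤
      (∫ t in (0:ℝ)..1, t * f' t) * (∫ t in (0:ℝ)..1, p t) :=
  moment_inequality_general f f' p hf hderiv hpc hp0 hpsym
end

section
/- Let f : ℝ → ℝ be convex, A, B Hermitian n×n matrices, and x ∈ ℂⁿ a unit vector. If p : [0,1] → ℝ is nonnegative, integrable, and symmetric about 1/2, then (∫₀¹ p(t) dt)·f((⟨Ax,x⟩ + ⟨Bx,x⟩)/2) ≤ ∫₀¹ p(t)·f((1−t)⟨Ax,x⟩ + t⟨Bx,x⟩) dt. -/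
/-!
Only the two real numbers `a = ⟨Ax,x⟩` and `b = ⟨Bx,x⟩` enter, so this is the left Fejér
inequality for `g(t) = f((1-t)a + tb)`. Averaging `g(t)` with its reflection `g(1-t)` gives at
least `f((a+b)/2)` by convexity, and since `p` is symmetric, the weighted integral of the
reflection equals that of `g`.
-/

open MeasureTheory Set intervalIntegral Matrix

section Reflection

variable {p g : ℝ → ℝ}

theorem intervalIntegrable_mul_comp_one_sub_of_symm
    (hpsym : ∀ t ∈ Icc (0:ℝ) 1, p (1 - t) = p t)
    (hg : IntervalIntegrable (fun t => p t * g t) volume 0 1) :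
    IntervalIntegrable (fun t => p t * g (1 - t)) volume 0 1 := by
  have hrefl := hg.comp_sub_left 1
  rw [sub_zero, sub_self] at hrefl
  refine hrefl.symm.congr fun t ht => ?_
  rw [uIoc_of_le zero_le_one] at ht
  simp only [hpsym t (Ioc_subset_Icc_self ht)]

theorem integral_mul_comp_one_sub_of_symm
    (hpsym : ∀ t ∈ Icc (0:ℝ) 1, p (1 - t) = p t) :
    ∫ t in (0:ℝ)..1, p t * g (1 - t) = ∫ t in (0:ℝ)..1, p t * g t := by
  calc ∫ t in (0:ℝ)..1, p t * g (1 - t)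
      = ∫ t in (0:ℝ)..1, p (1 - t) * g (1 - t) := by
        refine integral_congr fun t ht => ?_
        rw [uIcc_of_le zero_le_one] at ht
        simp only [hpsym t ht]
    _ = ∫ t in (0:ℝ)..1, p t * g t := by
        simpa using integral_comp_sub_left (fun t => p t * g t) (1:ℝ) (a := 0) (b := 1)

end Reflection

theorem ConvexOn.le_add_lineMap_reflect_div_two {s : Set ℝ} {f : ℝ → ℝ}
    (hf : ConvexOn ℝ s f) {a b : ℝ} (ha : a ∈ s) (hb : b ∈ s) {t : ℝ}
    (ht : t ∈ Icc (0:ℝ) 1) :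
    f ((a + b) / 2) ≤ (f ((1 - t) * a + t * b) + f ((1 - (1 - t)) * a + (1 - t) * b)) / 2 := by
  have mem : ∀ u ∈ Icc (0:ℝ) 1, (1 - u) * a + u * b ∈ s := fun u hu =>
    hf.1 ha hb (by linarith [hu.2]) hu.1 (by ring)
  have ht' : 1 - t ∈ Icc (0:ℝ) 1 := ⟨by linarith [ht.2], by linarith [ht.1]⟩
  calc f ((a + b) / 2)
      = f ((1 / 2 : ℝ) • ((1 - t) * a + t * b)
          + (1 / 2 : ℝ) • ((1 - (1 - t)) * a + (1 - t) * b)) := by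
        congr 1; simp only [smul_eq_mul]; ring
    _ ≤ (1 / 2 : ℝ) • f ((1 - t) * a + t * b)
          + (1 / 2 : ℝ) • f ((1 - (1 - t)) * a + (1 - t) * b) :=
        hf.2 (mem t ht) (mem (1 - t) ht') (by norm_num) (by norm_num) (by norm_num)
    _ = _ := by simp only [smul_eq_mul]; ring

/-- The left half of the Fejér (weighted Hermite–Hadamard) inequality on the segment from
`a` to `b`. -/
theorem ConvexOn.integral_mul_midpoint_le_integral_mul_lineMap {s : Set ℝ} {f : ℝ → ℝ}
    (hf : ConvexOn ℝ s f) {a b : ℝ} (ha : a ∈ s) (hb : b ∈ s) {p : ℝ → ℝ}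
    (hp0 : ∀ t ∈ Icc (0:ℝ) 1, 0 ≤ p t)
    (hpint : IntervalIntegrable p volume 0 1)
    (hpsym : ∀ t ∈ Icc (0:ℝ) 1, p (1 - t) = p t)
    (hint : IntervalIntegrable (fun t => p t * f ((1 - t) * a + t * b)) volume 0 1) :
    (∫ t in (0:ℝ)..1, p t) * f ((a + b) / 2) ≤
      ∫ t in (0:ℝ)..1, p t * f ((1 - t) * a + t * b) := by
  set g : ℝ → ℝ := fun t => f ((1 - t) * a + t * b)
  have hrefl : IntervalIntegrable (fun t => p t * g (1 - t)) volume 0 1 :=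
    intervalIntegrable_mul_comp_one_sub_of_symm hpsym hint
  calc (∫ t in (0:ℝ)..1, p t) * f ((a + b) / 2)
      = ∫ t in (0:ℝ)..1, p t * f ((a + b) / 2) := (intervalIntegral.integral_mul_const _ _).symm
    _ ≤ ∫ t in (0:ℝ)..1, (p t * g t + p t * g (1 - t)) / 2 := by
        refine integral_mono_on zero_le_one (hpint.mul_const _) ((hint.add hrefl).div_const 2)
          fun t ht => ?_
        rw [← mul_add, mul_div_assoc]
        exact mul_le_mul_of_nonneg_left (hf.le_add_lineMap_reflect_div_two ha hb ht) (hp0 t ht)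
    _ = ((∫ t in (0:ℝ)..1, p t * g t) + ∫ t in (0:ℝ)..1, p t * g (1 - t)) / 2 := by
        rw [intervalIntegral.integral_div, integral_add hint hrefl]
    _ = ∫ t in (0:ℝ)..1, p t * g t := by
        rw [integral_mul_comp_one_sub_of_symm hpsym]
        ring

theorem matrix_fejer_scalar_general {n : ℕ} (A B : Matrix (Fin n) (Fin n) ℂ)
    (f : ℝ → ℝ) (hf : ConvexOn ℝ Set.univ f)
    (p : ℝ → ℝ)
    (hp0 : ∀ t ∈ Icc (0:ℝ) 1, 0 ≤ p t)
    (hpint : IntervalIntegrable p volume 0 1)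
    (hpsym : ∀ t ∈ Icc (0:ℝ) 1, p (1 - t) = p t)
    (x : EuclideanSpace ℂ (Fin n))
    (hint : IntervalIntegrable (fun t => p t *
      f ((1 - t) * (star (x : Fin n → ℂ) ⬝ᵥ A.mulVec (x : Fin n → ℂ)).re
        + t * (star (x : Fin n → ℂ) ⬝ᵥ B.mulVec (x : Fin n → ℂ)).re)) volume 0 1) :
    (∫ t in (0:ℝ)..1, p t) *
        f (((star (x : Fin n → ℂ) ⬝ᵥ A.mulVec (x : Fin n → ℂ)).re
          + (star (x : Fin n → ℂ) ⬝ᵥ B.mulVec (x : Fin n → ℂ)).re) / 2) ≤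
      ∫ t in (0:ℝ)..1, p t *
        f ((1 - t) * (star (x : Fin n → ℂ) ⬝ᵥ A.mulVec (x : Fin n → ℂ)).re
          + t * (star (x : Fin n → ℂ) ⬝ᵥ B.mulVec (x : Fin n → ℂ)).re) :=
  hf.integral_mul_midpoint_le_integral_mul_lineMap (mem_univ _) (mem_univ _) hp0 hpint hpsym hint

theorem matrix_fejer_scalar {n : ℕ} (A B : Matrix (Fin n) (Fin n) ℂ)
    (hA : A.IsHermitian) (hB : B.IsHermitian)
    (f : ℝ → ℝ) (hf : ConvexOn ℝ Set.univ f)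
    (p : ℝ → ℝ)
    (hp0 : ∀ t ∈ Icc (0:ℝ) 1, 0 ≤ p t)
    (hpint : IntervalIntegrable p volume 0 1)
    (hpsym : ∀ t ∈ Icc (0:ℝ) 1, p (1 - t) = p t)
    (x : EuclideanSpace ℂ (Fin n)) (hx : ‖x‖ = 1)
    (hint : IntervalIntegrable (fun t => p t *
      f ((1 - t) * (star (x : Fin n → ℂ) ⬝ᵥ A.mulVec (x : Fin n → ℂ)).re
        + t * (star (x : Fin n → ℂ) ⬝ᵥ B.mulVec (x : Fin n → ℂ)).re)) volume 0 1) :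
    (∫ t in (0:ℝ)..1, p t) *
        f (((star (x : Fin n → ℂ) ⬝ᵥ A.mulVec (x : Fin n → ℂ)).re
          + (star (x : Fin n → ℂ) ⬝ᵥ B.mulVec (x : Fin n → ℂ)).re) / 2) ≤
      ∫ t in (0:ℝ)..1, p t *
        f ((1 - t) * (star (x : Fin n → ℂ) ⬝ᵥ A.mulVec (x : Fin n → ℂ)).re
          + t * (star (x : Fin n → ℂ) ⬝ᵥ B.mulVec (x : Fin n → ℂ)).re) :=
  matrix_fejer_scalar_general A B f hf p hp0 hpint hpsym x hint
end
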